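/- arXiv:2308.06637 — 6 statements merged into one kernel-verified Lean document; each statement's English description precedes it below -/
import Mathlib

section
/- In a primal fuzzy topological space (Y, T, P), the diamond operator commutes with finite unions: (λ ∪ μ)^⋄ = λ^⋄ ∪ μ^⋄ for all fuzzy sets λ, μ. -/
open unitInterval

noncomputable section

instance : Fact ((0:ℝ) ≤ 1) := ⟨zero_le_one⟩

variable {Y : Type*}

/-- Łukasiewicz disjunction of fuzzy sets: `(μ ⊕ ν)(y) = min (μ y + ν y) 1`. -/
def fOplus (μ ν : Y → I) : Y → I := fun y =>
  ⟨min ((μ y : ℝ) + (ν y : ℝ)) 1,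
    ⟨le_min (add_nonneg (μ y).2.1 (ν y).2.1) zero_le_one, min_le_right _ _⟩⟩

/-- Fuzzy complement: `μ̄ y = 1 - μ y`. -/
def fCompl (μ : Y → I) : Y → I := fun y => symm (μ y)

/-- A fuzzy primal on `Y`. -/
def IsFuzzyPrimal (P : Set (Y → I)) : Prop :=
  (fun _ => 1) ∉ P ∧
  (∀ μ ∈ P, ∀ ν : Y → I, (∀ y, ν y ≤ μ y) → ν ∈ P) ∧
  (∀ μ ν : Y → I, (fun y => min (μ y) (ν y)) ∈ P → μ ∈ P ∨ ν ∈ P)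

/-- A Chang fuzzy topology on `Y`. -/
def IsChang (T : Set (Y → I)) : Prop :=
  (fun _ => 0) ∈ T ∧ (fun _ => 1) ∈ T ∧
  (∀ μ ∈ T, ∀ ν ∈ T, (fun y => min (μ y) (ν y)) ∈ T) ∧
  (∀ S : Set (Y → I), S ⊆ T → (fun y => ⨆ μ : S, (μ : Y → I) y) ∈ T)

/-- Open q-neighborhoods of the fuzzy point `y_t`: open `ν` with `t + ν y > 1`. -/
def Qnbhd (T : Set (Y → I)) (y : Y) (t : I) : Set (Y → I) :=
  {ν | ν ∈ T ∧ 1 < (t : ℝ) + (ν y : ℝ)}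

/-- The diamond operator: `λ^⋄ y = sup {t ∈ (0,1] | ∀ ν ∈ Q(y_t), λ̄ ⊕ ν̄ ∈ P}`. -/
def fDiam (T P : Set (Y → I)) (lam : Y → I) : Y → I := fun y =>
  sSup {t : I | 0 < t ∧ ∀ ν ∈ Qnbhd T y t, fOplus (fCompl lam) (fCompl ν) ∈ P}

lemma I_coe_min (a b : I) : ((min a b : I) : ℝ) = min (a:ℝ) (b:ℝ) := by
  rcases le_total a b with h | h <;> simp [min_def, h]

lemma I_coe_max (a b : I) : ((max a b : I) : ℝ) = max (a:ℝ) (b:ℝ) := by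
  rcases le_total a b with h | h <;> simp [max_def, h]

theorem fDiam_union (T P : Set (Y → I)) (hT : IsChang T) (hP : IsFuzzyPrimal P) (lam μ : Y → I) :
    fDiam T P (fun y => max (lam y) (μ y)) =
      (fun y => max (fDiam T P lam y) (fDiam T P μ y)) := by
  funext y
  have hset : {t : I | 0 < t ∧ ∀ ν ∈ Qnbhd T y t,
        fOplus (fCompl (fun z => max (lam z) (μ z))) (fCompl ν) ∈ P}
      = {t : I | 0 < t ∧ ∀ ν ∈ Qnbhd T y t, fOplus (fCompl lam) (fCompl ν) ∈ P}
      ∪ {t : I | 0 < t ∧ ∀ ν ∈ Qnbhd T y t, fOplus (fCompl μ) (fCompl ν) ∈ P} := by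
    ext t
    simp only [Set.mem_setOf_eq, Set.mem_union]
    constructor
    · rintro ⟨ht, hall⟩
      by_contra hcon
      push_neg at hcon
      obtain ⟨h1, h2⟩ := hcon
      obtain ⟨ν, hν, hνP⟩ := h1 ht
      obtain ⟨ρ, hρ, hρP⟩ := h2 ht
      set sig : Y → I := fun z => min (ν z) (ρ z) with hsig
      have hsigQ : sig ∈ Qnbhd T y t := by
        refine ⟨hT.2.2.1 ν hν.1 ρ hρ.1, ?_⟩
        have : (sig y : ℝ) = min (ν y : ℝ) (ρ y : ℝ) := I_coe_min _ _
        rw [this]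
        rcases le_total (ν y : ℝ) (ρ y : ℝ) with h | h
        · simpa [min_eq_left h] using hν.2
        · simpa [min_eq_right h] using hρ.2
      have hmem := hall sig hsigQ
      have hle : ∀ z, (fun z => min (fOplus (fCompl lam) (fCompl ν) z)
            (fOplus (fCompl μ) (fCompl ρ) z)) z
          ≤ fOplus (fCompl (fun z => max (lam z) (μ z))) (fCompl sig) z := by
        intro z
        rw [← Subtype.coe_le_coe, I_coe_min]
        simp only [fOplus, fCompl, coe_symm_eq, I_coe_min, I_coe_max]
        rcases le_total (lam z : ℝ) (μ z : ℝ) with h | h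
        · calc min (min (1 - (lam z : ℝ) + (1 - (ν z : ℝ))) 1)
                   (min (1 - (μ z : ℝ) + (1 - (ρ z : ℝ))) 1)
              ≤ min (1 - (μ z : ℝ) + (1 - (ρ z : ℝ))) 1 := min_le_right _ _
            _ ≤ min (1 - max (lam z : ℝ) (μ z : ℝ) + (1 - min (ν z : ℝ) (ρ z : ℝ))) 1 := by
                apply min_le_min _ le_rfl
                have h1 : max (lam z : ℝ) (μ z : ℝ) = μ z := max_eq_right h
                have h2 : min (ν z : ℝ) (ρ z : ℝ) ≤ ρ z := min_le_right _ _
                linarith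
        · calc min (min (1 - (lam z : ℝ) + (1 - (ν z : ℝ))) 1)
                   (min (1 - (μ z : ℝ) + (1 - (ρ z : ℝ))) 1)
              ≤ min (1 - (lam z : ℝ) + (1 - (ν z : ℝ))) 1 := min_le_left _ _
            _ ≤ min (1 - max (lam z : ℝ) (μ z : ℝ) + (1 - min (ν z : ℝ) (ρ z : ℝ))) 1 := by
                apply min_le_min _ le_rfl
                have h1 : max (lam z : ℝ) (μ z : ℝ) = lam z := max_eq_left h
                have h2 : min (ν z : ℝ) (ρ z : ℝ) ≤ ν z := min_le_left _ _
                linarith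
      have hminP := hP.2.1 _ hmem _ hle
      rcases hP.2.2 _ _ hminP with h | h
      · exact hνP h
      · exact hρP h
    · have hmono : ∀ (a : Y → I), (∀ z, (a z : ℝ) ≤ max (lam z : ℝ) (μ z : ℝ)) →
          (∀ ν ∈ Qnbhd T y t, fOplus (fCompl a) (fCompl ν) ∈ P) →
          ∀ ν ∈ Qnbhd T y t, fOplus (fCompl (fun z => max (lam z) (μ z))) (fCompl ν) ∈ P := by
        intro a ha hall ν hν
        refine hP.2.1 _ (hall ν hν) _ fun z => ?_
        rw [← Subtype.coe_le_coe]
        simp only [fOplus, fCompl, coe_symm_eq, I_coe_max]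
        exact min_le_min (by linarith [ha z]) le_rfl
      rintro (⟨ht, hall⟩ | ⟨ht, hall⟩)
      · exact ⟨ht, hmono lam (fun z => le_max_left _ _) hall⟩
      · exact ⟨ht, hmono μ (fun z => le_max_right _ _) hall⟩
  simp only [fDiam]
  rw [hset, sSup_union]
end
end

section
/- In a primal fuzzy topological space (Y, T, P), λ^⋄ is fuzzy closed and contained in the fuzzy closure of λ: Cl(λ^⋄) = λ^⋄ ⊆ Cl(λ). -/
open unitInterval

noncomputable section

variable {Y : Type*}

/-- Fuzzy closure: `Cl(λ)` consists of the fuzzy points `y_t` each of whose open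
q-neighborhoods is quasi-coincident with `λ`. -/
def fCl (T : Set (Y → I)) (lam : Y → I) : Y → I := fun y =>
  sSup {t : I | 0 < t ∧ ∀ ν ∈ Qnbhd T y t, ∃ z, 1 < (lam z : ℝ) + (ν z : ℝ)}

theorem fDiam_closed_subset_closure (T P : Set (Y → I)) (hT : IsChang T) (hP : IsFuzzyPrimal P) (lam : Y → I) :
    fCl T (fDiam T P lam) = fDiam T P lam ∧ ∀ y, fDiam T P lam y ≤ fCl T lam y := by
  constructor
  · funext y
    apply le_antisymm
    · -- Cl(D) y ≤ D y
      apply sSup_le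
      rintro t ⟨ht0, ht⟩
      apply le_sSup
      refine ⟨ht0, fun ν hν => ?_⟩
      obtain ⟨z, hz⟩ := ht ν hν
      by_contra hnP
      have hle : fDiam T P lam z ≤ symm (ν z) := by
        apply sSup_le
        rintro s ⟨hs0, hs⟩
        by_contra hlt
        push_neg at hlt
        have : (1 : ℝ) < (s : ℝ) + (ν z : ℝ) := by
          have := Subtype.coe_lt_coe.2 hlt
          simp only [unitInterval.coe_symm_eq] at this
          linarith
        exact hnP (hs ν ⟨hν.1, this⟩)
      have : (fDiam T P lam z : ℝ) ≤ 1 - (ν z : ℝ) := by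
        have := Subtype.coe_le_coe.2 hle
        simpa [unitInterval.coe_symm_eq] using this
      linarith
    · -- D y ≤ Cl(D) y
      apply sSup_le
      rintro t ⟨ht0, ht⟩
      have htD : t ≤ fDiam T P lam y := le_sSup ⟨ht0, ht⟩
      apply le_sSup
      refine ⟨ht0, fun ν hν => ⟨y, ?_⟩⟩
      have := Subtype.coe_le_coe.2 htD
      have h2 := hν.2
      linarith
  · intro y
    apply sSup_le
    rintro t ⟨ht0, ht⟩
    apply le_sSup
    refine ⟨ht0, fun ν hν => ?_⟩
    by_contra hz
    push_neg at hz
    have heq : fOplus (fCompl lam) (fCompl ν) = (fun _ => 1) := by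
      funext z
      apply Subtype.ext
      simp only [fOplus, fCompl, unitInterval.coe_symm_eq]
      have := hz z
      show min ((1 - (lam z : ℝ)) + (1 - (ν z : ℝ))) 1 = ((1 : I) : ℝ)
      rw [min_eq_right (by linarith)]
      simp
    exact hP.1 (heq ▸ ht ν hν)
end
end

section
/- In a primal fuzzy topological space (Y, T, P), the diamond operator is idempotent-decreasing: (λ^⋄)^⋄ ⊆ λ^⋄ for every fuzzy set λ. -/
open unitInterval

noncomputable section

variable {Y : Type*}

theorem fDiam_fDiam_le (T P : Set (Y → I)) (hT : IsChang T) (hP : IsFuzzyPrimal P) (lam : Y → I) :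
    ∀ y, fDiam T P (fDiam T P lam) y ≤ fDiam T P lam y := by
  intro y
  apply sSup_le_sSup
  rintro t ⟨ht0, htν⟩
  refine ⟨ht0, fun ν hν => ?_⟩
  by_contra hnot
  have hle : ∀ z, (fDiam T P lam z : ℝ) ≤ 1 - (ν z : ℝ) := by
    intro z
    have : fDiam T P lam z ≤ unitInterval.symm (ν z) := by
      apply sSup_le
      rintro s ⟨hs0, hs⟩
      by_contra hlt
      push_neg at hlt
      have h1 : (1 : ℝ) < (s : ℝ) + (ν z : ℝ) := by
        have := Subtype.coe_lt_coe.mpr hlt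
        rw [unitInterval.coe_symm_eq] at this
        linarith
      exact hnot (hs ν ⟨hν.1, h1⟩)
    have := Subtype.coe_le_coe.mpr this
    rwa [unitInterval.coe_symm_eq] at this
  have heq : fOplus (fCompl (fDiam T P lam)) (fCompl ν) = fun _ => 1 := by
    funext z
    apply Subtype.ext
    show min ((unitInterval.symm (fDiam T P lam z) : ℝ)
        + (unitInterval.symm (ν z) : ℝ)) 1 = ((1 : I) : ℝ)
    rw [unitInterval.coe_symm_eq, unitInterval.coe_symm_eq]
    have := hle z
    simp only [Set.Icc.coe_one]
    rw [min_eq_right]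
    linarith
  have hmem := htν ν ⟨hν.1, hν.2⟩
  rw [heq] at hmem
  exact hP.1 hmem
end
end

section
/- In a primal fuzzy topological space (Y, T, P), if λ̄ ∉ P then (λ ∪ μ)^⋄ = μ^⋄ for every fuzzy set μ. -/
open unitInterval

noncomputable section

variable {Y : Type*}

theorem fDiam_union_of_compl_not_mem (T P : Set (Y → I)) (hT : IsChang T) (hP : IsFuzzyPrimal P)
    (lam μ : Y → I) (hlam : fCompl lam ∉ P) :
    fDiam T P (fun y => max (lam y) (μ y)) = fDiam T P μ := by
  have hkey : ∀ ν : Y → I,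
      fOplus (fCompl fun y => max (lam y) (μ y)) (fCompl ν)
        = fun y => min (fOplus (fCompl lam) (fCompl ν) y) (fOplus (fCompl μ) (fCompl ν) y) := by
    intro ν
    funext y
    apply Subtype.ext
    have h1 : ((symm (max (lam y) (μ y)) : I) : ℝ) = min (1 - (lam y : ℝ)) (1 - (μ y : ℝ)) := by
      simp only [coe_symm_eq]
      rcases le_total (lam y) (μ y) with h | h
      · have h' : (lam y : ℝ) ≤ (μ y : ℝ) := h
        rw [max_eq_right h, min_eq_right (by linarith)]
      · have h' : (μ y : ℝ) ≤ (lam y : ℝ) := h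
        rw [max_eq_left h, min_eq_left (by linarith)]
    show min (((symm (max (lam y) (μ y)) : I) : ℝ) + _) 1 = _
    rw [h1]
    have : ∀ a b c : ℝ, min (min a b + c) 1 = min (min (a + c) 1) (min (b + c) 1) := by
      intro a b c
      rcases le_total a b with h | h
      · rw [min_eq_left h, min_eq_left (min_le_min (by linarith) le_rfl)]
      · rw [min_eq_right h, min_eq_right (min_le_min (by linarith) le_rfl)]
    exact this _ _ _
  have hsub : ∀ ν : Y → I, fOplus (fCompl lam) (fCompl ν) ∉ P := by
    intro ν hmem
    exact hlam (hP.2.1 _ hmem _ (fun y => by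
      show fCompl lam y ≤ _
      apply Subtype.coe_le_coe.mp
      show ((fCompl lam y : I) : ℝ) ≤ min (((fCompl lam y : I) : ℝ) + ((fCompl ν y : I) : ℝ)) 1
      exact le_min (le_add_of_nonneg_right (fCompl ν y).2.1) (fCompl lam y).2.2))
  unfold fDiam
  funext y
  congr 1
  ext t
  refine and_congr_right fun _ => forall₂_congr fun ν hν => ?_
  rw [hkey ν]
  constructor
  · intro h
    rcases hP.2.2 _ _ h with h' | h'
    · exact absurd h' (hsub ν)
    · exact h'
  · intro h
    exact hP.2.1 _ h _ (fun z => min_le_right _ _)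
end
end

section
/- Let P₁, P₂ be fuzzy primals on a fuzzy topological space (Y, T). Then for every fuzzy set λ, λ^⋄_{P₁ ∪ P₂} = λ^⋄_{P₁} ∪ λ^⋄_{P₂}. -/
open unitInterval

noncomputable section

variable {Y : Type*}

theorem fDiam_union_primal (T P₁ P₂ : Set (Y → I)) (hT : IsChang T)
    (h₁ : IsFuzzyPrimal P₁) (h₂ : IsFuzzyPrimal P₂) (lam : Y → I) :
    fDiam T (P₁ ∪ P₂) lam = (fun y => max (fDiam T P₁ lam y) (fDiam T P₂ lam y)) := by
  funext y
  have key : {t : I | 0 < t ∧ ∀ ν ∈ Qnbhd T y t, fOplus (fCompl lam) (fCompl ν) ∈ P₁ ∪ P₂}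
      = {t : I | 0 < t ∧ ∀ ν ∈ Qnbhd T y t, fOplus (fCompl lam) (fCompl ν) ∈ P₁}
        ∪ {t : I | 0 < t ∧ ∀ ν ∈ Qnbhd T y t, fOplus (fCompl lam) (fCompl ν) ∈ P₂} := by
    ext t
    constructor
    · rintro ⟨ht, hall⟩
      by_contra hcon
      rw [Set.mem_union] at hcon
      push_neg at hcon
      obtain ⟨hc1, hc2⟩ := hcon
      simp only [Set.mem_setOf_eq, not_and, not_forall] at hc1 hc2
      obtain ⟨ν₁, hν₁Q, hν₁⟩ := hc1 ht
      obtain ⟨ν₂, hν₂Q, hν₂⟩ := hc2 ht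
      set ν : Y → I := fun z => min (ν₁ z) (ν₂ z) with hν
      have hνT : ν ∈ T := hT.2.2.1 ν₁ hν₁Q.1 ν₂ hν₂Q.1
      have hνQ : ν ∈ Qnbhd T y t := by
        refine ⟨hνT, ?_⟩
        rcases min_choice (ν₁ y) (ν₂ y) with h | h <;>
          simp only [hν, h] <;> [exact hν₁Q.2; exact hν₂Q.2]
      have hmem := hall ν hνQ
      have hle₁ : ∀ z, fOplus (fCompl lam) (fCompl ν₁) z ≤ fOplus (fCompl lam) (fCompl ν) z := by
        intro z
        rw [← Subtype.coe_le_coe]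
        apply min_le_min _ le_rfl
        have : (ν z : ℝ) ≤ (ν₁ z : ℝ) := Subtype.coe_le_coe.mpr (min_le_left _ _)
        simp only [fCompl, coe_symm_eq]
        linarith
      have hle₂ : ∀ z, fOplus (fCompl lam) (fCompl ν₂) z ≤ fOplus (fCompl lam) (fCompl ν) z := by
        intro z
        rw [← Subtype.coe_le_coe]
        apply min_le_min _ le_rfl
        have : (ν z : ℝ) ≤ (ν₂ z : ℝ) := Subtype.coe_le_coe.mpr (min_le_right _ _)
        simp only [fCompl, coe_symm_eq]
        linarith
      rcases hmem with h | h
      · exact hν₁ (h₁.2.1 _ h _ hle₁)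
      · exact hν₂ (h₂.2.1 _ h _ hle₂)
    · rintro (⟨ht, h⟩ | ⟨ht, h⟩)
      · exact ⟨ht, fun ν hν => Or.inl (h ν hν)⟩
      · exact ⟨ht, fun ν hν => Or.inr (h ν hν)⟩
  simp only [fDiam, key, sSup_union]
end
end

section
/- In a primal fuzzy topological space (Y, T, P), the operator Cl^⋄(λ) = λ ∪ λ^⋄ is a Kuratowski fuzzy closure operator: Cl^⋄(0_Y) = 0_Y; λ ⊆ Cl^⋄(λ); Cl^⋄(λ ∪ μ) = Cl^⋄(λ) ∪ Cl^⋄(μ); and Cl^⋄(Cl^⋄(λ)) = Cl^⋄(λ). -/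
open unitInterval

noncomputable section

variable {Y : Type*}

/-- `Cl^⋄(λ) = λ ∪ λ^⋄` (pointwise max). -/
def fClDiam (T P : Set (Y → I)) (lam : Y → I) : Y → I := fun y =>
  max (lam y) (fDiam T P lam y)
/-- The membership set defining `fDiam`. -/
def Sset (T P : Set (Y → I)) (lam : Y → I) (y : Y) : Set I :=
  {t : I | 0 < t ∧ ∀ ν ∈ Qnbhd T y t, fOplus (fCompl lam) (fCompl ν) ∈ P}

lemma fDiam_eq (T P : Set (Y → I)) (lam : Y → I) (y : Y) :
    fDiam T P lam y = sSup (Sset T P lam y) := rfl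

lemma I_sup_eq_max (a b : I) : a ⊔ b = max a b :=
  le_antisymm (sup_le (le_max_left _ _) (le_max_right _ _)) (max_le le_sup_left le_sup_right)

lemma coe_fOplus (μ ν : Y → I) (y : Y) : (fOplus μ ν y : ℝ) = min ((μ y : ℝ) + (ν y : ℝ)) 1 := rfl

lemma coe_fCompl (μ : Y → I) (y : Y) : (fCompl μ y : ℝ) = 1 - (μ y : ℝ) := rfl

/-- `fOplus` of complements is antitone in the first slot. -/
lemma fOplus_compl_le {lam mu ν : Y → I} (h : ∀ z, lam z ≤ mu z) (z : Y) :
    fOplus (fCompl mu) (fCompl ν) z ≤ fOplus (fCompl lam) (fCompl ν) z := by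
  have hz : (lam z : ℝ) ≤ mu z := h z
  show min ((1 - (mu z : ℝ)) + (1 - (ν z : ℝ))) 1 ≤ min ((1 - (lam z : ℝ)) + (1 - (ν z : ℝ))) 1
  exact min_le_min (by linarith) le_rfl

/-- `fOplus` is monotone in the second slot. -/
lemma fOplus_le_right {lam ν ν' : Y → I} (h : ∀ z, ν z ≤ ν' z) (z : Y) :
    fOplus (fCompl lam) (fCompl ν') z ≤ fOplus (fCompl lam) (fCompl ν) z := by
  have hz : (ν z : ℝ) ≤ ν' z := h z
  show min ((1 - (lam z : ℝ)) + (1 - (ν' z : ℝ))) 1 ≤ min ((1 - (lam z : ℝ)) + (1 - (ν z : ℝ))) 1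
  exact min_le_min (by linarith) le_rfl

lemma Sset_mono {T P : Set (Y → I)} (hP : IsFuzzyPrimal P) {lam mu : Y → I}
    (h : ∀ z, lam z ≤ mu z) (y : Y) : Sset T P lam y ⊆ Sset T P mu y := by
  rintro t ⟨ht0, ht⟩
  exact ⟨ht0, fun ν hν => hP.2.1 _ (ht ν hν) _ (fOplus_compl_le h)⟩

/-- The key union property: `S_{λ∪μ} = S_λ ∪ S_μ`. -/
lemma Sset_max {T P : Set (Y → I)} (hT : IsChang T) (hP : IsFuzzyPrimal P) (lam mu : Y → I)
    (y : Y) : Sset T P (fun z => max (lam z) (mu z)) y = Sset T P lam y ∪ Sset T P mu y := by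
  apply le_antisymm
  · rintro t ⟨ht0, ht⟩
    by_contra hcon
    rw [Set.mem_union, not_or] at hcon
    obtain ⟨hA, hB⟩ := hcon
    simp only [Sset, Set.mem_setOf_eq, ht0, true_and, not_forall] at hA hB
    obtain ⟨ν₁, hν₁, hν₁P⟩ := hA
    obtain ⟨ν₂, hν₂, hν₂P⟩ := hB
    set ν : Y → I := fun z => min (ν₁ z) (ν₂ z) with hνdef
    have hνT : ν ∈ T := hT.2.2.1 ν₁ hν₁.1 ν₂ hν₂.1
    have hνQ : ν ∈ Qnbhd T y t := by
      refine ⟨hνT, ?_⟩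
      have h1 : (1:ℝ) < (t:ℝ) + ν₁ y := hν₁.2
      have h2 : (1:ℝ) < (t:ℝ) + ν₂ y := hν₂.2
      have : (ν y : ℝ) = min ((ν₁ y : ℝ)) (ν₂ y) := rfl
      rw [this]
      rcases le_total ((ν₁ y : ℝ)) (ν₂ y) with h | h
      · rwa [min_eq_left h]
      · rwa [min_eq_right h]
    have hmem := ht ν hνQ
    have heq : fOplus (fCompl (fun z => max (lam z) (mu z))) (fCompl ν)
        = fun z => min (fOplus (fCompl lam) (fCompl ν) z) (fOplus (fCompl mu) (fCompl ν) z) := by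
      funext z
      apply Subtype.ext
      show min ((1 - (max (lam z) (mu z) : I) : ℝ) + (1 - (ν z : ℝ))) 1
          = min (min ((1 - (lam z : ℝ)) + (1 - (ν z : ℝ))) 1)
              (min ((1 - (mu z : ℝ)) + (1 - (ν z : ℝ))) 1)
      have hmax : ((max (lam z) (mu z) : I) : ℝ) = max ((lam z : ℝ)) (mu z) := rfl
      rw [hmax]
      rcases le_total ((lam z : ℝ)) ((mu z : ℝ)) with h | h
      · rw [max_eq_right h, min_eq_right (min_le_min (by linarith) le_rfl)]
      · rw [max_eq_left h, min_eq_left (min_le_min (by linarith) le_rfl)]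
    rw [heq] at hmem
    rcases hP.2.2 _ _ hmem with hc | hc
    · exact hν₁P (hP.2.1 _ hc _ (fOplus_le_right fun z => min_le_left _ _))
    · exact hν₂P (hP.2.1 _ hc _ (fOplus_le_right fun z => min_le_right _ _))
  · apply Set.union_subset
    · exact Sset_mono hP (fun z => le_max_left _ _) y
    · exact Sset_mono hP (fun z => le_max_right _ _) y

lemma fDiam_max {T P : Set (Y → I)} (hT : IsChang T) (hP : IsFuzzyPrimal P) (lam mu : Y → I)
    (y : Y) : fDiam T P (fun z => max (lam z) (mu z)) y
      = max (fDiam T P lam y) (fDiam T P mu y) := by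
  rw [fDiam_eq, fDiam_eq, fDiam_eq, Sset_max hT hP, sSup_union, I_sup_eq_max]

/-- `(λ^⋄)^⋄ ⊆ λ^⋄`. -/
lemma Sset_diam_subset {T P : Set (Y → I)} (hP : IsFuzzyPrimal P) (lam : Y → I) (y : Y) :
    Sset T P (fDiam T P lam) y ⊆ Sset T P lam y := by
  rintro t ⟨ht0, ht⟩
  refine ⟨ht0, fun ν hν => ?_⟩
  by_cases hcase : ∃ z, σ (ν z) < fDiam T P lam z
  · obtain ⟨z, hz⟩ := hcase
    have hex : ∃ s ∈ Sset T P lam z, σ (ν z) < s := by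
      by_contra hcon
      push_neg at hcon
      exact absurd (sSup_le hcon) (not_le.mpr hz)
    obtain ⟨s, hs, hslt⟩ := hex
    have hq : ν ∈ Qnbhd T z s := by
      refine ⟨hν.1, ?_⟩
      have : (1 : ℝ) - (ν z : ℝ) < s := hslt
      linarith
    exact hs.2 ν hq
  · exfalso
    push_neg at hcase
    have h1 : fOplus (fCompl (fDiam T P lam)) (fCompl ν) = fun _ => 1 := by
      funext z
      have hle : (fDiam T P lam z : ℝ) ≤ 1 - (ν z : ℝ) := hcase z
      apply Subtype.ext
      show min ((1 - (fDiam T P lam z : ℝ)) + (1 - (ν z : ℝ))) 1 = ((1 : I) : ℝ)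
      rw [min_eq_right (by linarith)]
      rfl
    exact hP.1 (h1 ▸ ht ν hν)

lemma fDiam_zero {T P : Set (Y → I)} (hT : IsChang T) (hP : IsFuzzyPrimal P) (y : Y) :
    fDiam T P (fun _ => (0 : I)) y = 0 := by
  rw [fDiam_eq]
  have hempty : Sset T P (fun _ => (0 : I)) y = ∅ := by
    ext t
    simp only [Set.mem_empty_iff_false, iff_false]
    rintro ⟨ht0, ht⟩
    have hq : (fun _ => (1 : I)) ∈ Qnbhd T y t := by
      refine ⟨hT.2.1, ?_⟩
      have : (0 : ℝ) < t := ht0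
      show (1 : ℝ) < (t : ℝ) + ((1 : I) : ℝ)
      simp only [Set.Icc.coe_one]
      linarith
    have hmem := ht _ hq
    have h1 : fOplus (fCompl (fun _ : Y => (0 : I))) (fCompl (fun _ : Y => (1 : I)))
        = fun _ : Y => (1 : I) := by
      funext z
      apply Subtype.ext
      show min ((1 - ((0 : I) : ℝ)) + (1 - ((1 : I) : ℝ))) 1 = ((1 : I) : ℝ)
      norm_num
    exact hP.1 (h1 ▸ hmem)
  rw [hempty]
  exact le_antisymm (sSup_le (by simp)) nonneg'

theorem fClDiam_kuratowski (T P : Set (Y → I)) (hT : IsChang T) (hP : IsFuzzyPrimal P) :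
    fClDiam T P (fun _ => 0) = (fun _ => 0) ∧
    (∀ lam : Y → I, ∀ y, lam y ≤ fClDiam T P lam y) ∧
    (∀ lam μ : Y → I, fClDiam T P (fun y => max (lam y) (μ y)) =
      (fun y => max (fClDiam T P lam y) (fClDiam T P μ y))) ∧
    (∀ lam : Y → I, fClDiam T P (fClDiam T P lam) = fClDiam T P lam) := by
  refine ⟨?_, ?_, ?_, ?_⟩
  · funext y
    show max ((0 : I)) (fDiam T P (fun _ => 0) y) = 0
    rw [fDiam_zero hT hP, max_self]
  · intro lam y
    exact le_max_left _ _
  · intro lam mu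
    funext y
    show max (max (lam y) (mu y)) (fDiam T P (fun z => max (lam z) (mu z)) y)
        = max (max (lam y) (fDiam T P lam y)) (max (mu y) (fDiam T P mu y))
    rw [fDiam_max hT hP, max_max_max_comm]
  · intro lam
    funext y
    have hdd : fDiam T P (fClDiam T P lam) y
        = max (fDiam T P lam y) (fDiam T P (fDiam T P lam) y) :=
      fDiam_max hT hP lam (fDiam T P lam) y
    have hle : fDiam T P (fDiam T P lam) y ≤ fDiam T P lam y :=
      sSup_le_sSup (Sset_diam_subset hP lam y)
    show max (fClDiam T P lam y) (fDiam T P (fClDiam T P lam) y) = fClDiam T P lam y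
    rw [hdd, max_eq_left hle]
    show max (max (lam y) (fDiam T P lam y)) (fDiam T P lam y) = max (lam y) (fDiam T P lam y)
    rw [max_assoc, max_self]
end
end
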